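/- Let H be a 5-uniform hypergraph on a finite vertex set V with n = |V| ≥ 5 vertices, given by a finite nonempty family (e_i)_{i∈I} of 5-element subsets of V (repeats allowed). If H is 2-colorable, then its average degree d̄ = 5|I|/n satisfies d̄ ≤ −(5/2)·λ_min − (5(n−1)/12)·λ^(2)_min, where λ_min is the smallest eigenvalue of the underlying graph adjacency matrix of H and λ^(2)_min is the smallest eigenvalue of the 2-subset graph adjacency matrix of H. -/

import Mathlib

/-!
Color the vertices by `x v = ±1` and put `y S = ∏ v ∈ S, x v` on 2-subsets. By the Rayleigh
bound, `λ_min · n ≤ xᵀ A x = ∑ₑ (σₑ² - 5)` and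
`λ⁽²⁾_min · C(n,2) ≤ yᵀ B y = ∑ₑ (σₑ⁴ - 22 σₑ² + 45) / 4`, where `σₑ = ∑ v ∈ e, x v`.
An edge that is not monochromatic has `σₑ ∈ {±1, ±3}`, and exactly for these values
`-(5/2)(σ² - 5) - (5/24)(σ⁴ - 22σ² + 45) = 5`; summing over the edges gives
`5|I| ≤ -(5/2) λ_min n - (5/6) λ⁽²⁾_min C(n,2)`.
-/

open Finset Matrix

def underlyingAdj {V I : Type*} [Fintype I] [DecidableEq V] (e : I → Finset V) :
    Matrix V V ℝ := fun u v =>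
  if u = v then 0 else ((Finset.univ.filter fun i => u ∈ e i ∧ v ∈ e i).card : ℝ)

lemma underlyingAdj_isHermitian {V I : Type*} [Fintype I] [DecidableEq V] (e : I → Finset V) :
    (underlyingAdj e).IsHermitian := by
  rw [Matrix.IsHermitian, Matrix.conjTranspose_eq_transpose_of_trivial]
  apply Matrix.IsSymm.ext
  intro i j
  simp only [underlyingAdj, eq_comm (a := j) (b := i)]
  rcases eq_or_ne i j with h | h
  · simp [h]
  · simp only [if_neg h, if_neg h]
    congr 2
    apply Finset.filter_congr
    intro x _
    simp [and_comm]

def twoSubsetAdj {V I : Type*} [Fintype V] [Fintype I] [DecidableEq V] (e : I → Finset V) :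
    Matrix {S : Finset V // S.card = 2} {S : Finset V // S.card = 2} ℝ := fun S T =>
  if Disjoint S.1 T.1 then ((Finset.univ.filter fun i => S.1 ∪ T.1 ⊆ e i).card : ℝ) else 0

lemma twoSubsetAdj_isHermitian {V I : Type*} [Fintype V] [Fintype I] [DecidableEq V]
    (e : I → Finset V) : (twoSubsetAdj e).IsHermitian := by
  rw [Matrix.IsHermitian, Matrix.conjTranspose_eq_transpose_of_trivial]
  apply Matrix.IsSymm.ext
  intro S T
  simp only [twoSubsetAdj, disjoint_comm, Finset.union_comm]

namespace Finset

variable {α : Type*} [DecidableEq α]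

theorem sum_offDiag_eq_sum_sum_sub_sum {M : Type*} [AddCommGroup M] (s : Finset α)
    (f : α × α → M) :
    ∑ p ∈ s.offDiag, f p = ∑ a ∈ s, ∑ b ∈ s, f (a, b) - ∑ a ∈ s, f (a, a) := by
  rw [← sum_product, ← diag_union_offDiag, sum_union (disjoint_diag_offDiag s), sum_diag,
    add_sub_cancel_left]

theorem sum_offDiag_mul_eq_sq_sub {R : Type*} [CommRing R] (s : Finset α) (x : α → R) :
    ∑ p ∈ s.offDiag, x p.1 * x p.2 = (∑ a ∈ s, x a) ^ 2 - ∑ a ∈ s, x a ^ 2 := by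
  simp only [sum_offDiag_eq_sum_sum_sub_sum, sq, sum_mul_sum]

theorem filter_offDiag_pair_eq {s T : Finset α} (hT : T ∈ s.powersetCard 2) :
    {p ∈ s.offDiag | ({p.1, p.2} : Finset α) = T} = T.offDiag := by
  obtain ⟨hTs, hT2⟩ := mem_powersetCard.mp hT
  ext p
  simp only [mem_filter, mem_offDiag]
  constructor
  · rintro ⟨⟨-, -, hne⟩, rfl⟩
    simp [hne]
  · rintro ⟨h1, h2, hne⟩
    refine ⟨⟨hTs h1, hTs h2, hne⟩, eq_of_subset_of_card_le ?_ ?_⟩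
    · exact insert_subset h1 (singleton_subset_iff.mpr h2)
    · rw [hT2, card_pair hne]

theorem two_nsmul_sum_powersetCard_two {M : Type*} [AddCommMonoid M] (s : Finset α)
    (f : Finset α → M) :
    2 • ∑ T ∈ s.powersetCard 2, f T = ∑ p ∈ s.offDiag, f {p.1, p.2} := by
  rw [← sum_fiberwise_of_maps_to (g := fun p : α × α => ({p.1, p.2} : Finset α))
    (t := s.powersetCard 2) (fun p hp => ?_), smul_sum]
  · refine sum_congr rfl fun T hT => ?_
    rw [sum_congr rfl fun p hp => congrArg f (mem_filter.mp hp).2, sum_const,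
      filter_offDiag_pair_eq hT, offDiag_card, (mem_powersetCard.mp hT).2]
  · obtain ⟨h1, h2, hne⟩ := mem_offDiag.mp hp
    exact mem_powersetCard.mpr ⟨insert_subset h1 (singleton_subset_iff.mpr h2), card_pair hne⟩

section Signs

variable {R : Type*} [CommRing R] {x : α → R}

theorem two_mul_sum_powersetCard_two_prod (hx : ∀ a, x a ^ 2 = 1) (s : Finset α) :
    2 * ∑ T ∈ s.powersetCard 2, ∏ a ∈ T, x a = (∑ a ∈ s, x a) ^ 2 - #s := by
  have hpair : ∀ p ∈ s.offDiag, ∏ a ∈ {p.1, p.2}, x a = x p.1 * x p.2 :=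
    fun p hp => prod_pair (mem_offDiag.mp hp).2.2
  rw [two_mul, ← two_nsmul, two_nsmul_sum_powersetCard_two, sum_congr rfl hpair,
    sum_offDiag_mul_eq_sq_sub, sum_congr rfl fun a _ => hx a, sum_const, nsmul_one]

theorem four_mul_sum_prod_disjoint_pairs (hx : ∀ a, x a ^ 2 = 1) {s : Finset α}
    (hs : #s = 5) :
    4 * ∑ S ∈ s.powersetCard 2, ∑ T ∈ (s \ S).powersetCard 2, (∏ a ∈ S, x a) * ∏ a ∈ T, x a =
      (∑ a ∈ s, x a) ^ 4 - 22 * (∑ a ∈ s, x a) ^ 2 + 45 := by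
  set σ := ∑ a ∈ s, x a
  have hinner : ∀ S ∈ s.powersetCard 2,
      2 * ∑ T ∈ (s \ S).powersetCard 2, (∏ a ∈ S, x a) * ∏ a ∈ T, x a =
        (∏ a ∈ S, x a) * ((σ - ∑ a ∈ S, x a) ^ 2 - 3) := by
    intro S hS
    obtain ⟨hSs, hS2⟩ := mem_powersetCard.mp hS
    rw [← mul_sum, mul_left_comm, two_mul_sum_powersetCard_two_prod hx, sum_sdiff_eq_sub hSs,
      card_sdiff_of_subset hSs, hs, hS2]
    norm_num [σ]
  have hterm : ∀ p ∈ s.offDiag,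
      (∏ a ∈ {p.1, p.2}, x a) * ((σ - ∑ a ∈ {p.1, p.2}, x a) ^ 2 - 3) =
        (σ ^ 2 - 1) * (x p.1 * x p.2) - 2 * σ * x p.1 - 2 * σ * x p.2 + 2 := by
    intro p hp
    have hne := (mem_offDiag.mp hp).2.2
    rw [prod_pair hne, sum_pair hne]
    linear_combination (2 * x p.2 ^ 2 + x p.1 * x p.2 - 2 * σ * x p.2) * hx p.1 +
      (x p.1 * x p.2 - 2 * σ * x p.1 + 2) * hx p.2
  calc 4 * ∑ S ∈ s.powersetCard 2, ∑ T ∈ (s \ S).powersetCard 2, (∏ a ∈ S, x a) * ∏ a ∈ T, x a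
      = 2 • ∑ S ∈ s.powersetCard 2, (∏ a ∈ S, x a) * ((σ - ∑ a ∈ S, x a) ^ 2 - 3) := by
        rw [← sum_congr rfl hinner, ← mul_sum, two_nsmul, ← two_mul, ← mul_assoc]
        norm_num
    _ = ∑ p ∈ s.offDiag, ((σ ^ 2 - 1) * (x p.1 * x p.2) - 2 * σ * x p.1 - 2 * σ * x p.2 + 2) := by
        rw [two_nsmul_sum_powersetCard_two, sum_congr rfl hterm]
    _ = σ ^ 4 - 22 * σ ^ 2 + 45 := by
        rw [sum_offDiag_eq_sum_sum_sub_sum]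
        simp only [sum_add_distrib, sum_sub_distrib, ← mul_sum, ← sum_mul, sum_const, hs,
          nsmul_eq_mul, ← sq, hx]
        simp only [σ]
        push_cast
        ring

end Signs

end Finset

theorem Matrix.IsHermitian.iInf_eigenvalues_mul_dotProduct_self_le {n : Type*} [Fintype n]
    [DecidableEq n] {A : Matrix n n ℝ} (hA : A.IsHermitian) (x : n → ℝ) :
    (⨅ i, hA.eigenvalues i) * (x ⬝ᵥ x) ≤ x ⬝ᵥ (A *ᵥ x) := by
  set U : Matrix n n ℝ := (hA.eigenvectorUnitary : Matrix n n ℝ)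
  set z := star U *ᵥ x with hz
  have hxU : x ᵥ* U = z := by
    rw [hz, star_eq_conjTranspose, conjTranspose_eq_transpose_of_trivial, mulVec_transpose]
  have hquad : x ⬝ᵥ (A *ᵥ x) = ∑ i, hA.eigenvalues i * (z i * z i) := by
    conv_lhs => rw [hA.spectral_theorem, Unitary.conjStarAlgAut_apply]
    rw [← mulVec_mulVec, ← mulVec_mulVec, dotProduct_mulVec, hxU, ← hz]
    simp only [dotProduct, mulVec_diagonal, Function.comp_apply, RCLike.ofReal_real_eq_id, id]
    exact sum_congr rfl fun i _ => by ring
  have hnorm : x ⬝ᵥ x = ∑ i, z i * z i := by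
    have hUU : U * star U = 1 := mem_unitaryGroup_iff.mp hA.eigenvectorUnitary.2
    calc x ⬝ᵥ x = x ⬝ᵥ ((U * star U) *ᵥ x) := by rw [hUU, one_mulVec]
      _ = z ⬝ᵥ z := by rw [← mulVec_mulVec, dotProduct_mulVec, hxU]
  rw [hquad, hnorm, mul_sum]
  gcongr with i
  · exact mul_self_nonneg _
  · exact ciInf_le (Set.finite_range _).bddBelow i

theorem Matrix.dotProduct_self_of_sq_eq_one {n : Type*} [Fintype n] {x : n → ℝ}
    (hx : ∀ i, x i ^ 2 = 1) : x ⬝ᵥ x = Fintype.card n := by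
  simp [dotProduct, ← sq, hx]

theorem sum_sign_mem_of_card_eq_five {α : Type*} {g : α → Bool} {s : Finset α} (hs : #s = 5)
    (hg : ∃ u ∈ s, ∃ v ∈ s, g u ≠ g v) :
    ∑ a ∈ s, (if g a then (1 : ℝ) else -1) ∈ ({-3, -1, 1, 3} : Finset ℝ) := by
  obtain ⟨u, hu, v, hv, huv⟩ := hg
  have hpos : ∀ b : Bool, 0 < #{a ∈ s | g a = b} := by
    intro b
    by_cases hub : g u = b
    · exact card_pos.mpr ⟨u, mem_filter.mpr ⟨hu, hub⟩⟩
    · exact card_pos.mpr ⟨v, mem_filter.mpr ⟨hv, by cases b <;> cases h : g u <;> simp_all⟩⟩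
  have hcard : #{a ∈ s | g a = true} + #{a ∈ s | g a = false} = 5 := by
    simpa only [Bool.not_eq_true, hs] using card_filter_add_card_filter_not (s := s) (g · = true)
  rw [sum_ite, sum_const, sum_const, nsmul_one, smul_neg, nsmul_one]
  simp only [Bool.not_eq_true]
  have htrue := hpos true
  have hfalse := hpos false
  generalize #{a ∈ s | g a = true} = m at *
  generalize #{a ∈ s | g a = false} = m' at *
  obtain rfl : m' = 5 - m := by omega
  have hm : m ≤ 4 := by omega
  interval_cases m <;> norm_num

theorem Matrix.dotProduct_mulVec_of_apply_eq_card {n ι : Type*} [Fintype n] [Fintype ι]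
    {M : Matrix n n ℝ} (P : ι → n → n → Prop) [∀ i u v, Decidable (P i u v)]
    (hM : ∀ u v, M u v = #{i | P i u v}) (x : n → ℝ) :
    x ⬝ᵥ (M *ᵥ x) = ∑ i, ∑ u, ∑ v, if P i u v then x u * x v else 0 := by
  simp only [dotProduct, mulVec, hM, natCast_card_filter, mul_sum, sum_mul]
  conv_rhs => rw [sum_comm]; enter [2, u]; rw [sum_comm]
  refine sum_congr rfl fun u _ => sum_congr rfl fun v _ => sum_congr rfl fun i _ => ?_
  split_ifs <;> ring

section Hypergraph

variable {V I : Type*} [DecidableEq V] [Fintype I]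

theorem dotProduct_underlyingAdj_mulVec [Fintype V] (e : I → Finset V) (x : V → ℝ) :
    x ⬝ᵥ (underlyingAdj e *ᵥ x) = ∑ i, ∑ p ∈ (e i).offDiag, x p.1 * x p.2 := by
  rw [dotProduct_mulVec_of_apply_eq_card (fun i u v => (u, v) ∈ (e i).offDiag)]
  · refine sum_congr rfl fun i _ => ?_
    rw [← sum_product' (f := fun u v => if (u, v) ∈ (e i).offDiag then x u * x v else 0),
      univ_product_univ, sum_ite_mem, univ_inter]
  · intro u v
    by_cases huv : u = v <;> simp [underlyingAdj, huv]

theorem sum_subtype_card_eq_two_ite_subset [Fintype V] (E : Finset V) (f : Finset V → ℝ) :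
    ∑ S : {S : Finset V // #S = 2}, (if S.1 ⊆ E then f S else 0) = ∑ S ∈ E.powersetCard 2, f S := by
  rw [← sum_subtype (univ.powersetCard 2) (fun S => mem_powersetCard_univ)
    (fun S => if S ⊆ E then f S else 0), ← sum_filter]
  congr 1
  ext S
  simp [mem_powersetCard, and_comm]

theorem dotProduct_twoSubsetAdj_mulVec [Fintype V] (e : I → Finset V) (f : Finset V → ℝ) :
    (fun S : {S : Finset V // #S = 2} => f S) ⬝ᵥ (twoSubsetAdj e *ᵥ fun S => f S) =
      ∑ i, ∑ S ∈ (e i).powersetCard 2, ∑ T ∈ (e i \ S).powersetCard 2, f S * f T := by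
  rw [dotProduct_mulVec_of_apply_eq_card (fun i S T => S.1 ⊆ e i ∧ T.1 ⊆ e i \ S.1)]
  · refine sum_congr rfl fun i _ => ?_
    rw [← sum_subtype_card_eq_two_ite_subset]
    refine sum_congr rfl fun S _ => ?_
    split_ifs with hS
    · rw [← sum_subtype_card_eq_two_ite_subset]
      exact sum_congr rfl fun T _ => by simp [hS]
    · exact sum_eq_zero fun T _ => by simp [hS]
  · intro S T
    have h : ∀ i, (Disjoint S.1 T.1 ∧ S.1 ∪ T.1 ⊆ e i) ↔ (S.1 ⊆ e i ∧ T.1 ⊆ e i \ S.1) := by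
      intro i
      rw [union_subset_iff, subset_sdiff, disjoint_comm]
      tauto
    by_cases hST : Disjoint S.1 T.1 <;> simp [twoSubsetAdj, hST, ← h]

theorem iInf_eigenvalues_underlyingAdj_mul_card_le [Fintype V] (e : I → Finset V) {x : V → ℝ}
    (hx : ∀ v, x v ^ 2 = 1) :
    (⨅ v, (underlyingAdj_isHermitian e).eigenvalues v) * Fintype.card V ≤
      ∑ i, ((∑ v ∈ e i, x v) ^ 2 - #(e i)) := by
  simpa [dotProduct_self_of_sq_eq_one hx, dotProduct_underlyingAdj_mulVec,
    sum_offDiag_mul_eq_sq_sub, hx] using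
    (underlyingAdj_isHermitian e).iInf_eigenvalues_mul_dotProduct_self_le x

theorem iInf_eigenvalues_twoSubsetAdj_mul_choose_le [Fintype V] {e : I → Finset V}
    (he : ∀ i, #(e i) = 5) {x : V → ℝ} (hx : ∀ v, x v ^ 2 = 1) :
    (⨅ S, (twoSubsetAdj_isHermitian e).eigenvalues S) * (Fintype.card V).choose 2 ≤
      ∑ i, ((∑ v ∈ e i, x v) ^ 4 - 22 * (∑ v ∈ e i, x v) ^ 2 + 45) / 4 := by
  set y : {S : Finset V // #S = 2} → ℝ := fun S => ∏ v ∈ S.1, x v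
  have hy : ∀ S, y S ^ 2 = 1 := fun S => by simp [y, ← prod_pow, hx]
  have hedge : ∀ i, ∑ S ∈ (e i).powersetCard 2, ∑ T ∈ (e i \ S).powersetCard 2,
      (∏ v ∈ S, x v) * ∏ v ∈ T, x v =
        ((∑ v ∈ e i, x v) ^ 4 - 22 * (∑ v ∈ e i, x v) ^ 2 + 45) / 4 := fun i => by
    rw [eq_div_iff four_ne_zero, mul_comm, four_mul_sum_prod_disjoint_pairs hx (he i)]
  have hray := (twoSubsetAdj_isHermitian e).iInf_eigenvalues_mul_dotProduct_self_le y
  rwa [dotProduct_self_of_sq_eq_one hy, Fintype.card_finset_len,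
    dotProduct_twoSubsetAdj_mulVec e (fun S => ∏ v ∈ S, x v), sum_congr rfl fun i _ => hedge i]
    at hray

end Hypergraph

theorem fiveUniform_two_colorable_general {V I : Type*} [Fintype V] [DecidableEq V]
    [Fintype I] (hn : 5 ≤ Fintype.card V)
    (e : I → Finset V) (he : ∀ i, (e i).card = 5)
    (hcol : ∃ g : V → Bool, ∀ i, ∃ u ∈ e i, ∃ v ∈ e i, g u ≠ g v) :
    (5 * Fintype.card I : ℝ) / (Fintype.card V : ℝ) ≤
      -(5 / 2) * (⨅ v, (underlyingAdj_isHermitian e).eigenvalues v) -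
        5 * ((Fintype.card V : ℝ) - 1) / 12 * ⨅ S, (twoSubsetAdj_isHermitian e).eigenvalues S := by
  obtain ⟨g, hg⟩ := hcol
  set x : V → ℝ := fun v => if g v then 1 else -1
  have hx : ∀ v, x v ^ 2 = 1 := fun v => by by_cases h : g v <;> simp [x, h]
  set σ : I → ℝ := fun i => ∑ v ∈ e i, x v
  set μ₁ := ⨅ v, (underlyingAdj_isHermitian e).eigenvalues v
  set μ₂ := ⨅ S, (twoSubsetAdj_isHermitian e).eigenvalues S
  have hA : μ₁ * (Fintype.card V : ℝ) ≤ ∑ i, (σ i ^ 2 - 5) := by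
    simpa [he] using iInf_eigenvalues_underlyingAdj_mul_card_le e hx
  have hB : μ₂ * ((Fintype.card V : ℝ) * (Fintype.card V - 1) / 2) ≤
      ∑ i, (σ i ^ 4 - 22 * σ i ^ 2 + 45) / 4 := by
    simpa [Nat.cast_choose_two] using iInf_eigenvalues_twoSubsetAdj_mul_choose_le he hx
  have hedge : ∀ i, -(5 / 2) * (σ i ^ 2 - 5) - 5 / 6 * ((σ i ^ 4 - 22 * σ i ^ 2 + 45) / 4) = 5 := by
    intro i
    have hσ : σ i ∈ ({-3, -1, 1, 3} : Finset ℝ) := sum_sign_mem_of_card_eq_five (he i) (hg i)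
    simp only [mem_insert, mem_singleton] at hσ
    rcases hσ with h | h | h | h <;> rw [h] <;> norm_num
  have hsum : -(5 / 2 : ℝ) * ∑ i, (σ i ^ 2 - 5) - 5 / 6 * ∑ i, (σ i ^ 4 - 22 * σ i ^ 2 + 45) / 4 =
      5 * Fintype.card I := by
    rw [mul_sum, mul_sum, ← sum_sub_distrib, sum_congr rfl fun i _ => hedge i]
    simp [mul_comm]
  have hpos : (0 : ℝ) < Fintype.card V := by exact_mod_cast (by omega : 0 < Fintype.card V)
  rw [div_le_iff₀ hpos]
  linarith

/-- If a 5-uniform hypergraph `H` on a finite vertex set with `n = |V| ≥ 5` vertices, given by a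
nonempty family `(e i)_{i : I}` of 5-element subsets, is 2-colorable, then its average degree
`d̄ = 5|I|/n` satisfies `d̄ ≤ -(5/2)·λ_min - (5(n-1)/12)·λ⁽²⁾_min`, where `λ_min` and `λ⁽²⁾_min`
are the smallest eigenvalues of the underlying graph and the 2-subset graph adjacency
matrices. -/
theorem fiveUniform_two_colorable {V I : Type*} [Fintype V] [DecidableEq V]
    [Fintype I] [Nonempty I] (hn : 5 ≤ Fintype.card V)
    (e : I → Finset V) (he : ∀ i, (e i).card = 5)
    (hcol : ∃ g : V → Bool, ∀ i, ∃ u ∈ e i, ∃ v ∈ e i, g u ≠ g v) :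
    (5 * Fintype.card I : ℝ) / (Fintype.card V : ℝ) ≤
      -(5 / 2) * (⨅ v, (underlyingAdj_isHermitian e).eigenvalues v) -
        5 * ((Fintype.card V : ℝ) - 1) / 12 * ⨅ S, (twoSubsetAdj_isHermitian e).eigenvalues S :=
  fiveUniform_two_colorable_general hn e he hcol
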